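/- arXiv:math/0602274 — 4 statements merged into one kernel-verified Lean document; each statement's English description precedes it below -/
import Mathlib

section
/- Let R be a commutative ring, J an ideal of R, and let ∂₁,...,∂ᵣ and d₁,...,dₛ be two finite families of derivations of R generating the same R-submodule M of Der(R). For f ∈ R, define ord(f) with respect to a generating family as the infimum of lengths n of multi-indices I = (i₁,...,iₙ) such that the composition ∂_{i₁}∘...∘∂_{iₙ}(f) ∉ J (with ord(f)=0 if f ∉ J, and ord(f)=∞ if no such composition exists). Then the value ord(f) computed with the family (∂ᵢ) equals the value computed with the family (dⱼ). -/
/-- Composition of derivations along a multi-index (a list of indices);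
the empty list gives the identity. -/
def compAlong {R : Type*} [CommRing R] {ι : Type*} (D : ι → Derivation ℤ R R)
    (I : List ι) (f : R) : R :=
  (I.map D).foldr (fun d x => d x) f

/-- The contact order of `f` with respect to the ideal `J` and the family `D`. -/
noncomputable def contactOrder {R : Type*} [CommRing R] (J : Ideal R) {ι : Type*}
    (D : ι → Derivation ℤ R R) (f : R) : ℕ∞ :=
  sInf {n : ℕ∞ | ∃ I : List ι, (I.length : ℕ∞) = n ∧ compAlong D I f ∉ J}

section Aux

variable {R : Type*} [CommRing R] {ι κ : Type*}

lemma compAlong_cons (D : ι → Derivation ℤ R R) (i : ι) (I : List ι) (f : R) :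
    compAlong D (i :: I) f = D i (compAlong D I f) := rfl

/-- span of compositions of length at most `n`. -/
def Tn (D : ι → Derivation ℤ R R) (f : R) (n : ℕ) : Submodule R R :=
  Submodule.span R {g | ∃ I : List ι, I.length ≤ n ∧ compAlong D I f = g}

lemma Tn_mono (D : ι → Derivation ℤ R R) (f : R) {n m : ℕ} (hnm : n ≤ m) :
    Tn D f n ≤ Tn D f m := by
  apply Submodule.span_mono
  rintro g ⟨I, hI, rfl⟩
  exact ⟨I, hI.trans hnm, rfl⟩

lemma step_gen (D : ι → Derivation ℤ R R) (f : R) (n : ℕ) (k : ι) :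
    ∀ x ∈ Tn D f n, D k x ∈ Tn D f (n + 1) := by
  intro x hx
  induction hx using Submodule.span_induction with
  | mem x hxmem =>
      obtain ⟨I', hlen, rfl⟩ := hxmem
      exact Submodule.subset_span ⟨k :: I', Nat.succ_le_succ hlen, rfl⟩
  | zero => simpa using Submodule.zero_mem _
  | add x y hx hy ihx ihy => simpa using Submodule.add_mem _ ihx ihy
  | smul a x hx ih =>
      rw [smul_eq_mul, Derivation.leibniz]
      refine Submodule.add_mem _ (Submodule.smul_mem _ _ ih) ?_
      have hx' : x ∈ Tn D f (n + 1) := Tn_mono D f (Nat.le_succ n) hx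
      have : x • (D k) a = (D k a) • x := mul_comm _ _
      rw [this]
      exact Submodule.smul_mem _ _ hx'

lemma step (D : ι → Derivation ℤ R R) (f : R) (n : ℕ) :
    ∀ d ∈ Submodule.span R (Set.range D), ∀ x ∈ Tn D f n, d x ∈ Tn D f (n + 1) := by
  intro d hd
  induction hd using Submodule.span_induction with
  | mem d hdmem =>
      obtain ⟨k, rfl⟩ := hdmem
      exact step_gen D f n k
  | zero => intro x hx; simpa using Submodule.zero_mem _
  | add d e hd he ihd ihe =>
      intro x hx
      simpa using Submodule.add_mem _ (ihd x hx) (ihe x hx)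
  | smul a d hd ih =>
      intro x hx
      have : (a • d) x = a • d x := rfl
      rw [this]
      exact Submodule.smul_mem _ _ (ih x hx)

lemma key (D : ι → Derivation ℤ R R) (E : κ → Derivation ℤ R R)
    (hle : Submodule.span R (Set.range E) ≤ Submodule.span R (Set.range D))
    (f : R) (I : List κ) :
    compAlong E I f ∈ Tn D f I.length := by
  induction I with
  | nil => exact Submodule.subset_span ⟨[], le_refl 0, rfl⟩
  | cons i I ih =>
      rw [compAlong_cons]
      exact step D f I.length (E i) (hle (Submodule.subset_span ⟨i, rfl⟩)) _ ih

lemma contactOrder_le (J : Ideal R) (D : ι → Derivation ℤ R R) (E : κ → Derivation ℤ R R)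
    (hle : Submodule.span R (Set.range E) ≤ Submodule.span R (Set.range D)) (f : R) :
    contactOrder J D f ≤ contactOrder J E f := by
  apply le_sInf
  rintro n ⟨I, rfl, hI⟩
  by_contra hcon
  push_neg at hcon
  have hall : ∀ I' : List ι, I'.length ≤ I.length → compAlong D I' f ∈ J := by
    intro I' hlen
    by_contra hnot
    have hmem : ((I'.length : ℕ∞)) ∈
        {n : ℕ∞ | ∃ I : List ι, (I.length : ℕ∞) = n ∧ compAlong D I f ∉ J} :=
      ⟨I', rfl, hnot⟩
    have := sInf_le hmem
    exact absurd (this.trans (by exact_mod_cast hlen)) (not_le_of_gt hcon)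
  have hsub : Tn D f I.length ≤ J.restrictScalars R := by
    rw [Tn, Submodule.span_le]
    rintro g ⟨I', hlen, rfl⟩
    exact hall I' hlen
  exact hI (hsub (key D E hle f I))

end Aux

/-- The contact order only depends on the `R`-submodule of derivations generated by
the family, not on the choice of generating family. -/
theorem stmt_3 {R : Type*} [CommRing R] (J : Ideal R) {r s : ℕ}
    (D : Fin r → Derivation ℤ R R) (E : Fin s → Derivation ℤ R R)
    (h : Submodule.span R (Set.range D) = Submodule.span R (Set.range E)) :
    ∀ f : R, contactOrder J D f = contactOrder J E f := by
  intro f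
  exact le_antisymm (contactOrder_le J D E h.ge f) (contactOrder_le J E D h.le f)
end

section
/- Let R be a commutative ring over a field of characteristic zero, P a prime ideal of R, and F a set of derivations of R closed under Lie bracket (or whose R-span is closed under Lie bracket). Let I(F,P) be the largest ideal of R contained in P and stable under every derivation in F. Then I(F,P) is a prime ideal. -/
section Aux
variable {k : Type*} [Field k] [CharZero k] {R : Type*} [CommRing R] [Algebra k R]

private def aL (l : List (Derivation k R R)) (x : R) : R :=
  l.foldl (fun y d => d y) x

private lemma aL_cons (d : Derivation k R R) (l : List (Derivation k R R)) (x : R) :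
    aL (d :: l) x = aL l (d x) := rfl

private lemma aL_add (l : List (Derivation k R R)) (x y : R) :
    aL l (x + y) = aL l x + aL l y := by
  induction l generalizing x y with
  | nil => rfl
  | cons d l ih => rw [aL_cons, map_add, ih]; rfl

private lemma aL_zero (l : List (Derivation k R R)) : aL l (0 : R) = 0 := by
  induction l with
  | nil => rfl
  | cons d l ih => rw [aL_cons, map_zero]; exact ih

private lemma aL_mul_mem {F : Set (Derivation k R R)} {P : Ideal R}
    (l : List (Derivation k R R)) (hl : ∀ d ∈ l, d ∈ F) (r x : R)
    (hx : ∀ l' : List (Derivation k R R), (∀ d ∈ l', d ∈ F) → aL l' x ∈ P) :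
    aL l (r * x) ∈ P := by
  induction l generalizing r x with
  | nil => exact P.mul_mem_left r (hx [] (by simp))
  | cons d l ih =>
    have hd : d ∈ F := hl d (by simp)
    have hl' : ∀ e ∈ l, e ∈ F := fun e he => hl e (by simp [he])
    have hdx : ∀ l' : List (Derivation k R R), (∀ e ∈ l', e ∈ F) → aL l' (d x) ∈ P := by
      intro l' h'
      exact hx (d :: l') (by
        intro e he
        rcases List.mem_cons.1 he with rfl | h
        · exact hd
        · exact h' e h)
    have hleib : d (r * x) = r * d x + d r * x := by
      rw [Derivation.leibniz]; simp [smul_eq_mul]; ring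
    rw [aL_cons, hleib, aL_add]
    exact P.add_mem (ih hl' r (d x) hdx) (ih hl' (d r) x hx)

private def Jid (F : Set (Derivation k R R)) (P : Ideal R) : Ideal R where
  carrier := {x | ∀ l : List (Derivation k R R), (∀ d ∈ l, d ∈ F) → aL l x ∈ P}
  zero_mem' := fun l _ => by rw [aL_zero]; exact P.zero_mem
  add_mem' := fun {x y} hx hy l hl => by rw [aL_add]; exact P.add_mem (hx l hl) (hy l hl)
  smul_mem' := fun r x hx => fun l hl => by
    rw [smul_eq_mul]; exact aL_mul_mem l hl r x hx

private lemma mem_Jid {F : Set (Derivation k R R)} {P : Ideal R} {x : R} :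
    x ∈ Jid F P ↔ ∀ l : List (Derivation k R R), (∀ d ∈ l, d ∈ F) → aL l x ∈ P :=
  Iff.rfl

private lemma iter_mem {F : Set (Derivation k R R)} {I₀ : Ideal R}
    (hstab : ∀ d ∈ F, ∀ x ∈ I₀, d x ∈ I₀)
    (l : List (Derivation k R R)) (hl : ∀ d ∈ l, d ∈ F) :
    ∀ f g : R, f * g ∈ I₀ → f ^ (2 ^ l.length) * aL l g ∈ I₀ := by
  induction l with
  | nil => intro f g h; simpa [aL] using h
  | cons d l ih =>
    intro f g h
    have hd : d ∈ F := hl d (by simp)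
    have h1 : d (f * g) ∈ I₀ := hstab d hd _ h
    have h2 : f ^ 2 * d g ∈ I₀ := by
      have hid : f ^ 2 * d g = f * d (f * g) - d f * (f * g) := by
        rw [Derivation.leibniz]; simp [smul_eq_mul]; ring
      rw [hid]
      exact I₀.sub_mem (I₀.mul_mem_left f h1) (I₀.mul_mem_left _ h)
    have h3 := ih (fun e he => hl e (by simp [he])) (f ^ 2) (d g) h2
    have hpow : (f ^ 2) ^ 2 ^ l.length = f ^ 2 ^ (d :: l).length := by
      rw [← pow_mul, List.length_cons, pow_succ]; ring_nf
    rw [aL_cons, ← hpow]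
    exact h3

private lemma cast_mul_mem (k : Type*) [Field k] [CharZero k] {R : Type*} [CommRing R]
    [Algebra k R] {I : Ideal R} {x : R} {n : ℕ} (hn : n ≠ 0)
    (h : (n : R) * x ∈ I) : x ∈ I := by
  have h1 : algebraMap k R ((n : k)⁻¹) * ((n : R) * x) ∈ I := I.mul_mem_left _ h
  have h2 : algebraMap k R ((n : k)⁻¹) * ((n : R) * x) = x := by
    rw [← mul_assoc, ← map_natCast (algebraMap k R) n, ← map_mul,
      inv_mul_cancel₀ (by exact_mod_cast hn : (n : k) ≠ 0), map_one, one_mul]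
  rwa [h2] at h1

private lemma key_step {I : Ideal R} (d : Derivation k R R)
    (hI : ∀ x ∈ I, d x ∈ I) (a : R) (m j : ℕ)
    (h : (d a) ^ j * a ^ (m + 1) ∈ I) : (d a) ^ (j + 2) * a ^ m ∈ I := by
  set b := d a with hb
  rcases j with _ | i
  · have h' : a ^ (m + 1) ∈ I := by simpa using h
    have h2 : d (a ^ (m + 1)) ∈ I := hI _ h'
    have h3 : d (a ^ (m + 1)) * b ∈ I := I.mul_mem_right b h2
    have hid : d (a ^ (m + 1)) * b = ((m : R) + 1) * (b ^ (0 + 2) * a ^ m) := by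
      rw [Derivation.leibniz_pow]
      simp only [nsmul_eq_mul, smul_eq_mul, Nat.add_sub_cancel, ← hb]
      push_cast; ring
    have h4 : ((m + 1 : ℕ) : R) * (b ^ (0 + 2) * a ^ m) ∈ I := by
      rw [Nat.cast_add, Nat.cast_one, ← hid]; exact h3
    exact cast_mul_mem k (Nat.succ_ne_zero m) h4
  · have h2 : d (b ^ (i + 1) * a ^ (m + 1)) ∈ I := hI _ h
    have h3 : d (b ^ (i + 1) * a ^ (m + 1)) * b ∈ I := I.mul_mem_right b h2
    have h4 : d b * (b ^ (i + 1) * a ^ (m + 1)) ∈ I := I.mul_mem_left _ h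
    have hid : ((m + 1 : ℕ) : R) * (b ^ (i + 1 + 2) * a ^ m)
        = d (b ^ (i + 1) * a ^ (m + 1)) * b
          - ((i + 1 : ℕ) : R) * (d b * (b ^ (i + 1) * a ^ (m + 1))) := by
      rw [Derivation.leibniz, Derivation.leibniz_pow, Derivation.leibniz_pow]
      simp only [nsmul_eq_mul, smul_eq_mul, Nat.add_sub_cancel, ← hb]
      push_cast; ring
    have h5 : ((m + 1 : ℕ) : R) * (b ^ (i + 1 + 2) * a ^ m) ∈ I := by
      rw [hid]; exact I.sub_mem h3 (I.mul_mem_left _ h4)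
    exact cast_mul_mem k (Nat.succ_ne_zero m) h5

private lemma key_iter {I : Ideal R} (d : Derivation k R R)
    (hI : ∀ x ∈ I, d x ∈ I) :
    ∀ (m j : ℕ) (a : R), (d a) ^ j * a ^ m ∈ I → (d a) ^ (j + 2 * m) ∈ I := by
  intro m
  induction m with
  | zero => intro j a h; simpa using h
  | succ m ih =>
    intro j a h
    have h1 := key_step d hI a m j h
    have h2 := ih (j + 2) a h1
    have : j + 2 * (m + 1) = j + 2 + 2 * m := by ring
    rw [this]; exact h2

private lemma rad_stab {I : Ideal R} (d : Derivation k R R)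
    (hI : ∀ x ∈ I, d x ∈ I) : ∀ x ∈ I.radical, d x ∈ I.radical := by
  intro x hx
  rw [Ideal.mem_radical_iff] at hx ⊢
  obtain ⟨n, hn⟩ := hx
  exact ⟨2 * n, by simpa using key_iter d hI n 0 x (by simpa using hn)⟩

end Aux

/-- If `P` is prime and `F` is a set of derivations closed under the Lie bracket,
then the largest ideal contained in `P` and stable under every derivation in `F`
is a prime ideal. -/
theorem stmt_8 {k : Type*} [Field k] [CharZero k] {R : Type*} [CommRing R]
    [Algebra k R] (F : Set (Derivation k R R))
    (hF : ∀ d ∈ F, ∀ e ∈ F, ⁅d, e⁆ ∈ F)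
    (P : Ideal R) (hP : P.IsPrime) (I₀ : Ideal R)
    (hle : I₀ ≤ P) (hstab : ∀ d ∈ F, ∀ x ∈ I₀, d x ∈ I₀)
    (hmax : ∀ I : Ideal R, I ≤ P → (∀ d ∈ F, ∀ x ∈ I, d x ∈ I) → I ≤ I₀) :
    I₀.IsPrime := by
  classical
  have hJle : Jid F P ≤ I₀ := by
    apply hmax
    · intro x hx; exact hx [] (by simp)
    · intro d hd x hx
      intro l hl
      exact hx (d :: l) (by
        intro e he
        rcases List.mem_cons.1 he with rfl | h
        · exact hd
        · exact hl e h)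
  constructor
  · intro h
    exact hP.ne_top (top_le_iff.1 (h ▸ hle))
  · intro f g hfg
    by_cases hg : g ∈ I₀
    · right; exact hg
    · left
      have hgJ : g ∉ Jid F P := fun h => hg (hJle h)
      obtain ⟨l₀, hl₀, hu⟩ : ∃ l : List (Derivation k R R),
          (∀ d ∈ l, d ∈ F) ∧ aL l g ∉ P := by
        by_contra hc
        push_neg at hc
        exact hgJ (fun l hl => hc l hl)
      set u := aL l₀ g with hu'
      set N := 2 ^ l₀.length with hN
      have hfu : f ^ N * u ∈ I₀ := iter_mem hstab l₀ hl₀ f g hfg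
      have haJ : f ^ N ∈ Jid F P := by
        rw [mem_Jid]
        intro l hl
        have h1 : u * f ^ N ∈ I₀ := by rwa [mul_comm] at hfu
        have h2 := iter_mem hstab l hl u (f ^ N) h1
        have h3 : u ^ 2 ^ l.length * aL l (f ^ N) ∈ P := hle h2
        rcases hP.mem_or_mem h3 with h4 | h4
        · exact absurd (hP.mem_of_pow_mem _ h4) hu
        · exact h4
      have hfNI : f ^ N ∈ I₀ := hJle haJ
      have hrad : I₀.radical ≤ I₀ := by
        apply hmax
        · exact le_trans (Ideal.radical_mono hle) (le_of_eq hP.radical)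
        · intro d hd x hx
          exact rad_stab d (hstab d hd) x hx
      exact hrad (Ideal.mem_radical_iff.2 ⟨N, hfNI⟩)
end

section
/- Let R = ℂ[x,y] and let ∂ = λ·x·(∂/∂x) + μ·y·(∂/∂y) where λ, μ ∈ ℂ are such that λ/μ is irrational (i.e. aλ + bμ = 0 with a,b ∈ ℤ forces a = b = 0). Then every nonzero ∂-stable prime ideal of R of height one is either (x) or (y). Equivalently, the only irreducible algebraic curves invariant under ∂ are the coordinate axes. -/
set_option maxHeartbeats 1000000

open MvPolynomial

noncomputable def auxMap (i : Fin 2) : MvPolynomial (Fin 2) ℂ →ₐ[ℂ] MvPolynomial (Fin 2) ℂ :=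
  aeval (fun j => if j = i then 0 else X j)

lemma aux_ker_eq (i : Fin 2) (p : MvPolynomial (Fin 2) ℂ)
    (hp : auxMap i p = 0) : p ∈ Ideal.span {(X i : MvPolynomial (Fin 2) ℂ)} := by
  have key : ∀ q : MvPolynomial (Fin 2) ℂ,
      q - auxMap i q ∈ Ideal.span {(X i : MvPolynomial (Fin 2) ℂ)} := by
    intro q
    induction q using MvPolynomial.induction_on with
    | C a => simp [auxMap]
    | add p q hp hq => simpa [add_sub_add_comm] using Ideal.add_mem _ hp hq
    | mul_X p n hp =>
      by_cases hn : n = i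
      · subst hn
        rw [show (auxMap n) (p * X n) = 0 by simp [auxMap], sub_zero]
        exact Ideal.mem_span_singleton.2 (dvd_mul_left _ _)
      · rw [show (auxMap i) (p * X n) = (auxMap i) p * X n by simp [auxMap, hn],
          show p * X n - (auxMap i) p * X n = (p - (auxMap i) p) * X n by ring]
        exact Ideal.mul_mem_right _ _ hp
  have := key p
  rwa [hp, sub_zero] at this

lemma aux_prime_span (i : Fin 2) : (Ideal.span {(X i : MvPolynomial (Fin 2) ℂ)}).IsPrime := by
  have hker : Ideal.span {(X i : MvPolynomial (Fin 2) ℂ)}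
      = RingHom.ker (auxMap i).toRingHom := by
    apply le_antisymm
    · rw [Ideal.span_le]
      rintro x rfl
      simp [RingHom.mem_ker, auxMap]
    · intro p hp
      exact aux_ker_eq i p hp
  rw [hker]
  exact RingHom.ker_isPrime _

lemma aux_mono_eigen (l m : ℂ)
    (d : Derivation ℂ (MvPolynomial (Fin 2) ℂ) (MvPolynomial (Fin 2) ℂ))
    (hdx : d (X 0) = C l * X 0) (hdy : d (X 1) = C m * X 1) :
    ∀ (s : Fin 2 →₀ ℕ) (a : ℂ),
      d (monomial s a) = C ((s 0 : ℂ) * l + (s 1 : ℂ) * m) * monomial s a := by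
  have hD : d = (C l * X 0 : MvPolynomial (Fin 2) ℂ) • (pderiv 0)
      + (C m * X 1 : MvPolynomial (Fin 2) ℂ) • (pderiv 1) := by
    apply MvPolynomial.derivation_ext
    intro i
    fin_cases i <;>
      simp [hdx, hdy, pderiv_X, Pi.single_apply]
  intro s a
  have hx : ∀ i : Fin 2, (X i : MvPolynomial (Fin 2) ℂ) * monomial (s - Finsupp.single i 1) (a * s i)
      = monomial s (a * s i) := by
    intro i
    rcases Nat.eq_zero_or_pos (s i) with h | h
    · simp [h]
    · rw [X, monomial_mul, one_mul]
      have hadd : Finsupp.single i 1 + (s - Finsupp.single i 1) = s := by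
        ext j
        simp only [Finsupp.add_apply, Finsupp.tsub_apply, Finsupp.single_apply]
        rcases eq_or_ne i j with rfl | hj
        · simp; omega
        · simp [hj]
      rw [hadd]
  rw [hD]
  simp only [Derivation.add_apply, Derivation.smul_apply, pderiv_monomial, smul_eq_mul]
  rw [mul_assoc, mul_assoc, hx 0, hx 1, C_mul_monomial, C_mul_monomial, C_mul_monomial, ← map_add]
  congr 1
  ring

/-- If `λ/μ` is irrational (`aλ + bμ = 0` with integers `a,b` forces `a = b = 0`),
then every nonzero height-one prime ideal of `ℂ[x,y]` stable under
`∂ = λx·∂/∂x + μy·∂/∂y` is `(x)` or `(y)`. Height one is expressed by saying that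
the only prime strictly below `Q` is `⊥`. -/
theorem stmt_13 (l m : ℂ)
    (hirr : ∀ a b : ℤ, (a : ℂ) * l + (b : ℂ) * m = 0 → a = 0 ∧ b = 0)
    (d : Derivation ℂ (MvPolynomial (Fin 2) ℂ) (MvPolynomial (Fin 2) ℂ))
    (hdx : d (X 0) = C l * X 0) (hdy : d (X 1) = C m * X 1)
    (Q : Ideal (MvPolynomial (Fin 2) ℂ)) (hQ : Q.IsPrime) (hQ0 : Q ≠ ⊥)
    (hht : ∀ Q' : Ideal (MvPolynomial (Fin 2) ℂ), Q'.IsPrime → Q' < Q → Q' = ⊥)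
    (hstab : ∀ f ∈ Q, d f ∈ Q) :
    Q = Ideal.span {X 0} ∨ Q = Ideal.span {(X 1 : MvPolynomial (Fin 2) ℂ)} := by
  classical
  set eig : (Fin 2 →₀ ℕ) → ℂ := fun s => (s 0 : ℂ) * l + (s 1 : ℂ) * m with heigdef
  have hd := aux_mono_eigen l m d hdx hdy
  -- eigenvalues are pairwise distinct
  have heig : ∀ s t : Fin 2 →₀ ℕ, eig s = eig t → s = t := by
    intro s t h
    have h2 := hirr ((s 0 : ℤ) - (t 0 : ℤ)) ((s 1 : ℤ) - (t 1 : ℤ)) (by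
      push_cast
      simp only [heigdef] at h
      linear_combination h)
    obtain ⟨h1, h2⟩ := h2
    have e0 : s 0 = t 0 := by omega
    have e1 : s 1 = t 1 := by omega
    ext j
    fin_cases j
    · exact e0
    · exact e1
  -- coefficient formula for d
  have hdcoeff : ∀ (f : MvPolynomial (Fin 2) ℂ) (t : Fin 2 →₀ ℕ),
      coeff t (d f) = eig t * coeff t f := by
    intro f t
    conv_lhs => rw [f.as_sum, map_sum]
    rw [coeff_sum]
    simp only [hd, coeff_C_mul, coeff_monomial, mul_ite, mul_zero]
    rw [Finset.sum_ite_eq' f.support t (fun u => eig u * coeff u f)]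
    split_ifs with h
    · rfl
    · rw [notMem_support_iff.1 h, mul_zero]
  -- every monomial of an element of Q lies in Q
  have key : ∀ (n : ℕ) (f : MvPolynomial (Fin 2) ℂ), f.support.card ≤ n → f ∈ Q →
      ∀ s ∈ f.support, monomial s (coeff s f) ∈ Q := by
    intro n
    induction n with
    | zero =>
      intro f hc _ s hs
      rw [Nat.le_zero, Finset.card_eq_zero] at hc
      rw [hc] at hs
      exact absurd hs (Finset.notMem_empty s)
    | succ n ih =>
      intro f hcard hfQ s hs
      set g : MvPolynomial (Fin 2) ℂ := d f - C (eig s) * f with hg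
      have hgQ : g ∈ Q := Q.sub_mem (hstab f hfQ) (Q.mul_mem_left _ hfQ)
      have hgcoeff : ∀ t, coeff t g = (eig t - eig s) * coeff t f := by
        intro t
        simp only [hg, coeff_sub, hdcoeff, coeff_C_mul, sub_mul]
      have hgsupp : g.support ⊆ f.support.erase s := by
        intro t ht
        have h1 : coeff t g ≠ 0 := mem_support_iff.1 ht
        rw [Finset.mem_erase]
        constructor
        · rintro rfl
          exact h1 (by rw [hgcoeff, sub_self, zero_mul])
        · by_contra h2
          exact h1 (by rw [hgcoeff, notMem_support_iff.1 h2, mul_zero])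
      have hcard' : g.support.card ≤ n := by
        have h3 := Finset.card_le_card hgsupp
        have h4 := Finset.card_erase_of_mem hs
        omega
      have hterm : ∀ t ∈ f.support.erase s, monomial t (coeff t f) ∈ Q := by
        intro t ht
        obtain ⟨hts, htf⟩ := Finset.mem_erase.1 ht
        have hne : eig t - eig s ≠ 0 := fun h => hts (heig t s (sub_eq_zero.1 h))
        have htg : t ∈ g.support := by
          rw [mem_support_iff, hgcoeff]
          exact mul_ne_zero hne (mem_support_iff.1 htf)
        have h1 := ih g hcard' hgQ t htg
        have h2 : monomial t (coeff t f) = C (eig t - eig s)⁻¹ * monomial t (coeff t g) := by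
          rw [hgcoeff, C_mul_monomial, inv_mul_cancel_left₀ hne]
        rw [h2]
        exact Q.mul_mem_left _ h1
      have hrepr : monomial s (coeff s f) = f - ∑ t ∈ f.support.erase s, monomial t (coeff t f) := by
        rw [eq_sub_iff_add_eq,
          Finset.add_sum_erase f.support (fun t => monomial t (coeff t f)) hs]
        exact f.as_sum.symm
      rw [hrepr]
      exact Q.sub_mem hfQ (Ideal.sum_mem _ hterm)
  -- produce a nonzero monomial in Q
  obtain ⟨f, hfQ, hf0⟩ := Submodule.exists_mem_ne_zero_of_ne_bot hQ0
  obtain ⟨s, hs⟩ := (f.support_nonempty).2 hf0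
  have hmono : monomial s (coeff s f) ∈ Q := key _ f le_rfl hfQ s hs
  have hcf : coeff s f ≠ 0 := mem_support_iff.1 hs
  have hCnot : ∀ c : ℂ, c ≠ 0 → (C c : MvPolynomial (Fin 2) ℂ) ∉ Q := by
    intro c hc hmem
    exact hQ.ne_top (Q.eq_top_of_isUnit_mem hmem (IsUnit.map (C : ℂ →+* MvPolynomial (Fin 2) ℂ) (isUnit_iff_ne_zero.2 hc)))
  -- X 0 ∈ Q or X 1 ∈ Q
  have hX : X 0 ∈ Q ∨ (X 1 : MvPolynomial (Fin 2) ℂ) ∈ Q := by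
    have hmonomial_eq : (monomial s (coeff s f) : MvPolynomial (Fin 2) ℂ)
        = C (coeff s f) * (X 0 ^ s 0 * X 1 ^ s 1) := by
      rw [monomial_eq]
      congr 1
      rw [Finsupp.prod_fintype _ _ (fun i => pow_zero _), Fin.prod_univ_two]
    rw [hmonomial_eq] at hmono
    have h5 := (hQ.mem_or_mem hmono).resolve_left (hCnot _ hcf)
    rcases hQ.mem_or_mem h5 with h6 | h6
    · rcases Nat.eq_zero_or_pos (s 0) with h7 | h7
      · rw [h7, pow_zero] at h6
        exact absurd (Q.eq_top_of_isUnit_mem h6 isUnit_one) hQ.ne_top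
      · exact Or.inl (hQ.mem_of_pow_mem _ h6)
    · rcases Nat.eq_zero_or_pos (s 1) with h7 | h7
      · rw [h7, pow_zero] at h6
        exact absurd (Q.eq_top_of_isUnit_mem h6 isUnit_one) hQ.ne_top
      · exact Or.inr (hQ.mem_of_pow_mem _ h6)
  -- conclude using height one
  have final : ∀ i : Fin 2, X i ∈ Q → Q = Ideal.span {(X i : MvPolynomial (Fin 2) ℂ)} := by
    intro i hXi
    have hsp : Ideal.span {(X i : MvPolynomial (Fin 2) ℂ)} ≤ Q :=
      Ideal.span_le.2 (by simpa using hXi)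
    rcases eq_or_lt_of_le hsp with h | h
    · exact h.symm
    · have hbot := hht _ (aux_prime_span i) h
      rw [Ideal.span_singleton_eq_bot] at hbot
      exact absurd hbot (X_ne_zero i)
  rcases hX with h | h
  · exact Or.inl (final 0 h)
  · exact Or.inr (final 1 h)
end

section
/- Let R = ℂ[x,y] and ∂ = λ·x·(∂/∂x) + μ·y·(∂/∂y) with λ, μ not both zero and λ/μ irrational over ℚ (aλ + bμ = 0 with a,b ∈ ℤ implies a = b = 0). Then ∂ has no rational first integral: the only f ∈ ℂ(x,y) with ∂(f) = 0 are the constants. -/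
/-!
On polynomials the derivation acts diagonally on monomials, `∂(x^a y^b) = (aλ + bμ) x^a y^b`,
and the hypothesis on `λ, μ` makes these weights pairwise distinct, so the eigenvectors of `∂`
are exactly the scalar multiples of monomials. Write a first integral as a reduced fraction
`p / q`. Then `∂(p / q) = 0` gives `q ∂p = p ∂q`, hence `q ∣ ∂q`; since `∂` does not enlarge
supports it does not raise the degree, so `∂q = c q` for a constant `c`, and then `∂p = c p`.
Thus `p` and `q` are multiples of the same monomial and `p / q` is a constant.
-/

open MvPolynomial Finsupp

theorem Finsupp.weight_injective_of_linearIndependent {σ M : Type*} [AddCommGroup M]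
    {ℓ : σ → M} (hℓ : LinearIndependent ℤ ℓ) :
    Function.Injective (weight ℓ : (σ →₀ ℕ) → M) := by
  have hcast : ∀ s : σ →₀ ℕ,
      weight ℓ s = linearCombination ℤ ℓ (s.mapRange (↑) Nat.cast_zero) := by
    intro s
    simp [weight_apply, linearCombination_apply, Finsupp.sum_mapRange_index]
  intro s t hst
  rw [hcast, hcast] at hst
  exact mapRange_injective _ _ Nat.cast_injective (hℓ hst)

namespace MvPolynomial

variable {σ R : Type*} [CommSemiring R] (ℓ : σ → R)

noncomputable def weightedEuler : Derivation R (MvPolynomial σ R) (MvPolynomial σ R) :=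
  mkDerivation R fun i => ℓ i • X i

theorem weightedEuler_monomial (s : σ →₀ ℕ) (a : R) :
    weightedEuler ℓ (monomial s a) = monomial s (weight ℓ s * a) := by
  classical
  have hterm : ∀ i, monomial (s - single i 1) (s i : R) • (ℓ i • X i : MvPolynomial σ R) =
      (s i • ℓ i) • monomial s (1 : R) := by
    intro i
    rw [← one_mul (s i : R), ← pderiv_monomial, smul_comm, smul_eq_mul, mul_comm,
      X_mul_pderiv_monomial, smul_comm, smul_assoc]
  rw [weightedEuler, mkDerivation_monomial, Finsupp.sum, Finset.sum_congr rfl fun i _ => hterm i,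
    ← Finset.sum_smul, weight_apply, Finsupp.sum, smul_monomial, smul_monomial, smul_eq_mul,
    smul_eq_mul, mul_one, mul_comm]

theorem coeff_weightedEuler (p : MvPolynomial σ R) (s : σ →₀ ℕ) :
    coeff s (weightedEuler ℓ p) = weight ℓ s * coeff s p := by
  induction p using MvPolynomial.induction_on' with
  | monomial t a =>
    classical
    rw [weightedEuler_monomial, coeff_monomial, coeff_monomial]
    split_ifs with hts
    · rw [hts]
    · rw [mul_zero]
  | add p q hp hq => rw [map_add, coeff_add, coeff_add, hp, hq, mul_add]

theorem support_weightedEuler_subset (p : MvPolynomial σ R) :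
    (weightedEuler ℓ p).support ⊆ p.support := fun s hs => by
  rw [mem_support_iff, coeff_weightedEuler] at hs
  exact mem_support_iff.mpr (right_ne_zero_of_mul hs)

variable {ℓ} in
theorem apply_algebraMap_eq_weightedEuler {A : Type*} [CommSemiring A] [Algebra R A]
    [Algebra (MvPolynomial σ R) A] [IsScalarTower R (MvPolynomial σ R) A] (d : Derivation R A A)
    (hd : ∀ i, d (algebraMap _ A (X i : MvPolynomial σ R)) =
      algebraMap R A (ℓ i) * algebraMap _ A (X i : MvPolynomial σ R))
    (p : MvPolynomial σ R) :
    d (algebraMap _ A p) = algebraMap _ A (weightedEuler ℓ p) := by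
  have hext : d.compAlgebraMap (MvPolynomial σ R) =
      (Algebra.linearMap (MvPolynomial σ R) A).compDer (weightedEuler ℓ) := by
    refine derivation_ext fun i => ?_
    simp only [Derivation.compAlgebraMap_apply, hd, Derivation.coe_comp, LinearMap.coe_comp,
      LinearMap.coe_restrictScalars, Derivation.coeFn_coe, Function.comp_apply, weightedEuler,
      mkDerivation_X, Algebra.linearMap_apply, smul_eq_C_mul, map_mul]
    rw [← algebraMap_eq, ← IsScalarTower.algebraMap_apply]
  exact congrArg (· p) hext

section IsDomain

variable [IsDomain R] {ℓ}

theorem exists_weightedEuler_eq_smul_of_dvd {q : MvPolynomial σ R} (hq : q ≠ 0)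
    (h : q ∣ weightedEuler ℓ q) : ∃ c : R, weightedEuler ℓ q = c • q := by
  obtain ⟨r, hr⟩ := h
  rcases eq_or_ne r 0 with rfl | hr0
  · exact ⟨0, by rw [hr, mul_zero, zero_smul]⟩
  have hdeg : q.totalDegree + r.totalDegree ≤ q.totalDegree := by
    rw [← totalDegree_mul_of_isDomain hq hr0, ← hr]
    exact totalDegree_le_of_support_subset (support_weightedEuler_subset ℓ q)
  obtain ⟨c, rfl⟩ : ∃ c, r = C c := ⟨_, totalDegree_eq_zero_iff_eq_C.mp (by omega)⟩
  exact ⟨c, by rw [hr, mul_comm, smul_eq_C_mul]⟩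

theorem weight_eq_of_mem_support {p : MvPolynomial σ R} {c : R}
    (h : weightedEuler ℓ p = c • p) {s : σ →₀ ℕ} (hs : s ∈ p.support) : weight ℓ s = c := by
  have := congrArg (coeff s) h
  rw [coeff_weightedEuler, coeff_smul, smul_eq_mul] at this
  exact mul_right_cancel₀ (mem_support_iff.mp hs) this

theorem eq_monomial_of_weightedEuler_eq_smul
    (hℓ : Function.Injective (weight ℓ : (σ →₀ ℕ) → R)) {p : MvPolynomial σ R} {c : R}
    (h : weightedEuler ℓ p = c • p) {s : σ →₀ ℕ} (hs : weight ℓ s = c) :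
    p = monomial s (coeff s p) := by
  classical
  ext t
  rw [coeff_monomial]
  split_ifs with hst
  · rw [hst]
  · by_contra ht
    exact hst (hℓ (hs.trans (weight_eq_of_mem_support h (mem_support_iff.mpr ht)).symm))

end IsDomain

section Field

variable {K : Type*} [Field K] {ℓ : σ → K}

theorem exists_eq_C_mul_of_weightedEuler_eq_smul
    (hℓ : Function.Injective (weight ℓ : (σ →₀ ℕ) → K)) {p q : MvPolynomial σ K} {c : K}
    (hp : weightedEuler ℓ p = c • p) (hq : weightedEuler ℓ q = c • q) (hq0 : q ≠ 0) :
    ∃ a : K, p = C a * q := by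
  obtain ⟨s, hs⟩ := support_nonempty.mpr hq0
  have hsc := weight_eq_of_mem_support hq hs
  refine ⟨coeff s p / coeff s q, ?_⟩
  calc p = monomial s (coeff s p) := eq_monomial_of_weightedEuler_eq_smul hℓ hp hsc
    _ = C (coeff s p / coeff s q) * monomial s (coeff s q) := by
      rw [C_mul_monomial, div_mul_cancel₀ _ (mem_support_iff.mp hs)]
    _ = C (coeff s p / coeff s q) * q := by
      rw [← eq_monomial_of_weightedEuler_eq_smul hℓ hq hsc]

theorem exists_eq_C_mul_of_isRelPrime
    (hℓ : Function.Injective (weight ℓ : (σ →₀ ℕ) → K)) {p q : MvPolynomial σ K}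
    (hpq : IsRelPrime p q) (hq0 : q ≠ 0)
    (h : q * weightedEuler ℓ p = p * weightedEuler ℓ q) : ∃ a : K, p = C a * q := by
  obtain ⟨c, hq⟩ :=
    exists_weightedEuler_eq_smul_of_dvd hq0 (hpq.symm.dvd_of_dvd_mul_left ⟨_, h.symm⟩)
  have hp : weightedEuler ℓ p = c • p :=
    mul_left_cancel₀ hq0 (by rw [h, hq, mul_smul_comm, mul_smul_comm, mul_comm])
  exact exists_eq_C_mul_of_weightedEuler_eq_smul hℓ hp hq hq0

end Field

end MvPolynomial

theorem stmt_14_general (l m : ℂ)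
    (hirr : ∀ a b : ℤ, (a : ℂ) * l + (b : ℂ) * m = 0 → a = 0 ∧ b = 0)
    (d : Derivation ℂ (FractionRing (MvPolynomial (Fin 2) ℂ))
      (FractionRing (MvPolynomial (Fin 2) ℂ)))
    (x y : FractionRing (MvPolynomial (Fin 2) ℂ))
    (hx : x = algebraMap (MvPolynomial (Fin 2) ℂ) _ (X 0))
    (hy : y = algebraMap (MvPolynomial (Fin 2) ℂ) _ (X 1))
    (hdx : d x = algebraMap ℂ _ l * x) (hdy : d y = algebraMap ℂ _ m * y) :
    ∀ f : FractionRing (MvPolynomial (Fin 2) ℂ), d f = 0 →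
      ∃ c : ℂ, f = algebraMap ℂ _ c := by
  intro f hf
  subst hx hy
  set D := weightedEuler ![l, m]
  have hℓ : Function.Injective (weight ![l, m] : (Fin 2 →₀ ℕ) → ℂ) :=
    weight_injective_of_linearIndependent <| LinearIndependent.pair_iff.mpr fun a b h =>
      hirr a b (by simpa [zsmul_eq_mul] using h)
  have hd : ∀ p, d (algebraMap _ _ p) = algebraMap _ _ (D p) :=
    apply_algebraMap_eq_weightedEuler d (Fin.forall_fin_two.mpr ⟨hdx, hdy⟩)
  obtain ⟨p, q, hpq, hf_eq⟩ :=
    IsFractionRing.exists_reduced_fraction (MvPolynomial (Fin 2) ℂ) f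
  have hfq : f * algebraMap _ _ (q : MvPolynomial (Fin 2) ℂ) = algebraMap _ _ p := by
    rw [← hf_eq, IsLocalization.mk'_spec]
  have hfD : f * algebraMap _ _ (D q) = algebraMap _ _ (D p) := by
    simpa [d.leibniz, hf, hd] using congrArg d hfq
  have hqD : (q : MvPolynomial (Fin 2) ℂ) * D p = p * D q := by
    apply IsFractionRing.injective _ (FractionRing (MvPolynomial (Fin 2) ℂ))
    rw [map_mul, map_mul, ← hfD, ← hfq]
    ring
  obtain ⟨a, rfl⟩ := exists_eq_C_mul_of_isRelPrime hℓ hpq (nonZeroDivisors.ne_zero q.2) hqD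
  refine ⟨a, mul_right_cancel₀ (IsFractionRing.to_map_ne_zero_of_mem_nonZeroDivisors q.2) ?_⟩
  rw [hfq, map_mul, ← algebraMap_eq, ← IsScalarTower.algebraMap_apply]

/-- If `(λ,μ) ≠ (0,0)` and `aλ + bμ = 0` with integers `a,b` forces `a = b = 0`, then
the derivation of `ℂ(x,y)` with `∂x = λx`, `∂y = μy` has no rational first integral:
the only `f` with `∂f = 0` are the constants. -/
theorem stmt_14 (l m : ℂ) (hlm : (l, m) ≠ (0, 0))
    (hirr : ∀ a b : ℤ, (a : ℂ) * l + (b : ℂ) * m = 0 → a = 0 ∧ b = 0)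
    (d : Derivation ℂ (FractionRing (MvPolynomial (Fin 2) ℂ))
      (FractionRing (MvPolynomial (Fin 2) ℂ)))
    (x y : FractionRing (MvPolynomial (Fin 2) ℂ))
    (hx : x = algebraMap (MvPolynomial (Fin 2) ℂ) _ (X 0))
    (hy : y = algebraMap (MvPolynomial (Fin 2) ℂ) _ (X 1))
    (hdx : d x = algebraMap ℂ _ l * x) (hdy : d y = algebraMap ℂ _ m * y) :
    ∀ f : FractionRing (MvPolynomial (Fin 2) ℂ), d f = 0 →
      ∃ c : ℂ, f = algebraMap ℂ _ c :=
  stmt_14_general l m hirr d x y hx hy hdx hdy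
end
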